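/- arXiv:2604.27762 — 2 statements merged into one kernel-verified Lean document; each statement's English description precedes it below -/
import Mathlib

section
/- If φ(z)=(az+b)/(cz+d) is a linear fractional transformation with ad−bc≠0 mapping the unit disk into itself, then σ(z)=(ā z − c̄)/(−b̄ z + d̄) also maps the unit disk into itself. -/
/-!
Write `w = conj z`, so that `σ(z) = conj ((a w - c) / (d - b w))`; it suffices to show
`‖a w - c‖ < ‖d - b w‖` for `‖w‖ < 1`. By continuity `‖a u + b‖ ≤ ‖c u + d‖` on the closed disk,
and since `ad - bc ≠ 0` the two linear forms have no common root, so `c u + d ≠ 0` there.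
Now solve `w (a u + b) = c u + d`, i.e. `u = (d - b w) / (a w - c)`: such a `u` cannot lie in the
closed disk, because there `‖c u + d‖ = ‖w‖ ‖a u + b‖ < ‖a u + b‖`. Hence `‖u‖ > 1`, which is
the claimed inequality.
-/

open Metric

theorem det_eq_zero_of_common_root {R : Type*} [CommRing R] {a b c d z : R}
    (h₁ : a * z + b = 0) (h₂ : c * z + d = 0) : a * d - b * c = 0 := by
  linear_combination a * h₂ - c * h₁

theorem dense_setOf_mul_add_ne_zero {𝕜 : Type*} [NontriviallyNormedField 𝕜] {c d : 𝕜}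
    (hcd : c ≠ 0 ∨ d ≠ 0) : Dense {z : 𝕜 | c * z + d ≠ 0} := by
  rcases eq_or_ne c 0 with rfl | hc
  · simp [hcd.resolve_left (not_not.2 rfl)]
  · convert dense_compl_singleton (-d / c) using 1
    ext z
    simp only [Set.mem_ofPred_eq, Set.mem_compl_iff, Set.mem_singleton_iff]
    rw [not_iff_not, eq_div_iff hc]
    constructor <;> intro h <;> linear_combination h

section MobiusDisk

variable {a b c d : ℂ}

theorem norm_mul_add_le_of_mapsTo_ball (h : a * d - b * c ≠ 0)
    (hφ : ∀ z : ℂ, ‖z‖ < 1 → ‖(a * z + b) / (c * z + d)‖ < 1) {u : ℂ} (hu : ‖u‖ ≤ 1) :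
    ‖a * u + b‖ ≤ ‖c * u + d‖ := by
  have hcd : c ≠ 0 ∨ d ≠ 0 := by
    by_contra! hcd
    exact h (by simp [hcd.1, hcd.2])
  have hsub : ball (0 : ℂ) 1 ∩ {z | c * z + d ≠ 0} ⊆ {z | ‖a * z + b‖ ≤ ‖c * z + d‖} := by
    rintro z ⟨hz, hden⟩
    have := hφ z (mem_ball_zero_iff.1 hz)
    rw [norm_div, div_lt_one (norm_pos_iff.2 hden)] at this
    exact this.le
  have hclosed : IsClosed {z : ℂ | ‖a * z + b‖ ≤ ‖c * z + d‖} :=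
    isClosed_le (by fun_prop) (by fun_prop)
  have hu' : u ∈ closure (ball (0 : ℂ) 1) := by
    rwa [closure_ball _ one_ne_zero, mem_closedBall_zero_iff]
  have hball : ball (0 : ℂ) 1 ⊆ {z | ‖a * z + b‖ ≤ ‖c * z + d‖} :=
    ((dense_setOf_mul_add_ne_zero hcd).open_subset_closure_inter isOpen_ball).trans
      (closure_minimal hsub hclosed)
  exact closure_minimal hball hclosed hu'

theorem mul_add_ne_zero_of_mapsTo_ball (h : a * d - b * c ≠ 0)
    (hφ : ∀ z : ℂ, ‖z‖ < 1 → ‖(a * z + b) / (c * z + d)‖ < 1) {u : ℂ} (hu : ‖u‖ ≤ 1) :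
    c * u + d ≠ 0 := by
  intro hden
  have hnum := norm_mul_add_le_of_mapsTo_ball h hφ hu
  rw [hden, norm_zero, norm_le_zero_iff] at hnum
  exact h (det_eq_zero_of_common_root hnum hden)

theorem one_lt_norm_of_mapsTo_ball (h : a * d - b * c ≠ 0)
    (hφ : ∀ z : ℂ, ‖z‖ < 1 → ‖(a * z + b) / (c * z + d)‖ < 1) {u w : ℂ} (hw : ‖w‖ < 1)
    (huw : w * (a * u + b) = c * u + d) : 1 < ‖u‖ := by
  by_contra! hu
  have hden := norm_pos_iff.2 (mul_add_ne_zero_of_mapsTo_ball h hφ hu)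
  have hle := norm_mul_add_le_of_mapsTo_ball h hφ hu
  have := calc ‖c * u + d‖ = ‖w‖ * ‖a * u + b‖ := by rw [← huw, norm_mul]
    _ ≤ ‖w‖ * ‖c * u + d‖ := by gcongr
    _ < ‖c * u + d‖ := mul_lt_of_lt_one_left hden hw
  exact this.false

theorem norm_mul_sub_lt_of_mapsTo_ball (h : a * d - b * c ≠ 0)
    (hφ : ∀ z : ℂ, ‖z‖ < 1 → ‖(a * z + b) / (c * z + d)‖ < 1) {w : ℂ} (hw : ‖w‖ < 1) :
    ‖a * w - c‖ < ‖d - b * w‖ := by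
  rcases eq_or_ne (a * w - c) 0 with hac | hac
  · rw [hac, norm_zero, norm_pos_iff]
    intro hbd
    exact h (by linear_combination a * hbd + b * hac)
  · obtain ⟨u, hu⟩ : ∃ u, u * (a * w - c) = d - b * w := ⟨_, div_mul_cancel₀ _ hac⟩
    have hu_gt := one_lt_norm_of_mapsTo_ball h hφ hw (u := u) (by linear_combination hu)
    rw [← hu, norm_mul]
    exact lt_mul_of_one_lt_left (norm_pos_iff.2 hac) hu_gt

end MobiusDisk

theorem adjoint_symbol_maps_disk_to_disk (a b c d : ℂ) (h : a * d - b * c ≠ 0)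
    (hφ : ∀ z : ℂ, ‖z‖ < 1 → ‖(a * z + b) / (c * z + d)‖ < 1) :
    ∀ z : ℂ, ‖z‖ < 1 →
      (-(starRingEnd ℂ b) * z + starRingEnd ℂ d ≠ 0 ∧
        ‖(starRingEnd ℂ a * z - starRingEnd ℂ c) /
            (-(starRingEnd ℂ b) * z + starRingEnd ℂ d)‖ < 1) := by
  intro z hz
  have key := norm_mul_sub_lt_of_mapsTo_ball h hφ (w := starRingEnd ℂ z)
    (by rwa [Complex.norm_conj])
  have hnum : starRingEnd ℂ a * z - starRingEnd ℂ c
      = starRingEnd ℂ (a * starRingEnd ℂ z - c) := by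
    simp
  have hden : -(starRingEnd ℂ b) * z + starRingEnd ℂ d
      = starRingEnd ℂ (d - b * starRingEnd ℂ z) := by
    simp only [map_sub, map_mul, Complex.conj_conj]
    ring
  have hpos : 0 < ‖-(starRingEnd ℂ b) * z + starRingEnd ℂ d‖ := by
    rw [hden, Complex.norm_conj]
    exact (norm_nonneg _).trans_lt key
  refine ⟨norm_pos_iff.1 hpos, ?_⟩
  rw [norm_div, div_lt_one hpos, hnum, hden, Complex.norm_conj, Complex.norm_conj]
  exact key
end

section
/- For 0<a<1, the symbol map of the n-th iterated Aluthge transform, ψ_n(z) = (−(1+a)((1−a)(1+a)^{n−1}−2^n a^n)z+(1−a)((1+a)^n+2^n a^n))/(−(1−a)((1+a)^n−2^n a^n)z+(1+a)((1−a)(1+a)^{n−1}+2^n a^n)), maps the open unit disk into itself for each n ≥ 1. -/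
/-!
Write `P = (1 + a)^(n-1)` and `q = 2^n a^n`. Both numerator and denominator of `ψ_n` are affine
in `z` with real coefficients, and the difference of their squared moduli is
`4 a q ((1 - a²) P |1 - z|² + q (1 - |z|²))`, which is positive on the open unit disk.
-/

open Complex

theorem Complex.normSq_ofReal_mul_add_ofReal (c d : ℝ) (z : ℂ) :
    normSq (c * z + d) = c ^ 2 * normSq z + 2 * c * d * z.re + d ^ 2 := by
  simp only [normSq_apply, add_re, add_im, mul_re, mul_im, ofReal_re, ofReal_im]
  ring

theorem Complex.norm_lt_norm_iff_normSq_lt {w v : ℂ} :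
    ‖w‖ < ‖v‖ ↔ normSq w < normSq v := by
  rw [normSq_eq_norm_sq, normSq_eq_norm_sq, sq_lt_sq₀ (norm_nonneg _) (norm_nonneg _)]

theorem ne_zero_and_norm_div_lt_one_of_norm_lt {𝕜 : Type*} [NormedDivisionRing 𝕜]
    {w v : 𝕜} (h : ‖w‖ < ‖v‖) : v ≠ 0 ∧ ‖w / v‖ < 1 := by
  have hv : v ≠ 0 := norm_pos_iff.mp ((norm_nonneg w).trans_lt h)
  exact ⟨hv, by rwa [norm_div, div_lt_one (norm_pos_iff.mpr hv)]⟩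

theorem normSq_psi_den_sub_normSq_psi_num (a P q : ℝ) (z : ℂ) :
    normSq (-(1 - a) * ((1 + a) * P - q) * z + (1 + a) * ((1 - a) * P + q))
      - normSq (-(1 + a) * ((1 - a) * P - q) * z + (1 - a) * ((1 + a) * P + q))
      = 4 * a * q * ((1 - a ^ 2) * P * normSq (1 - z) + q * (1 - normSq z)) := by
  have h₁ := normSq_ofReal_mul_add_ofReal
    (-(1 - a) * ((1 + a) * P - q)) ((1 + a) * ((1 - a) * P + q)) z
  have h₂ := normSq_ofReal_mul_add_ofReal
    (-(1 + a) * ((1 - a) * P - q)) ((1 - a) * ((1 + a) * P + q)) z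
  have h₃ := normSq_ofReal_mul_add_ofReal (-1) 1 z
  push_cast at h₁ h₂ h₃
  rw [h₁, h₂, show 1 - z = -1 * z + 1 by ring, h₃]
  ring

theorem norm_psi_num_lt_norm_psi_den {a P q : ℝ} (ha₀ : 0 < a) (ha₁ : a ≤ 1) (hP : 0 ≤ P)
    (hq : 0 < q) {z : ℂ} (hz : ‖z‖ < 1) :
    ‖-(1 + a) * ((1 - a) * P - q) * z + (1 - a) * ((1 + a) * P + q)‖
      < ‖-(1 - a) * ((1 + a) * P - q) * z + (1 + a) * ((1 - a) * P + q)‖ := by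
  rw [norm_lt_norm_iff_normSq_lt, ← sub_pos, normSq_psi_den_sub_normSq_psi_num]
  have hz' : normSq z < 1 := by
    rw [normSq_eq_norm_sq]; exact pow_lt_one₀ (norm_nonneg z) hz two_ne_zero
  have ha : 0 ≤ 1 - a ^ 2 := by nlinarith
  have h₁ := normSq_nonneg (1 - z)
  have h₂ : 0 < q * (1 - normSq z) := mul_pos hq (by linarith)
  positivity

theorem psi_n_maps_disk_to_disk (a : ℝ) (ha0 : 0 < a) (ha1 : a < 1) (n : ℕ) (hn : 1 ≤ n)
    (z : ℂ) (hz : ‖z‖ < 1) :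
    (-(1 - (a : ℂ)) * ((1 + (a : ℂ)) ^ n - 2 ^ n * (a : ℂ) ^ n) * z
        + (1 + (a : ℂ)) * ((1 - (a : ℂ)) * (1 + (a : ℂ)) ^ (n - 1) + 2 ^ n * (a : ℂ) ^ n) ≠ 0) ∧
      ‖(-(1 + (a : ℂ)) * ((1 - (a : ℂ)) * (1 + (a : ℂ)) ^ (n - 1) - 2 ^ n * (a : ℂ) ^ n) * z
          + (1 - (a : ℂ)) * ((1 + (a : ℂ)) ^ n + 2 ^ n * (a : ℂ) ^ n)) /
        (-(1 - (a : ℂ)) * ((1 + (a : ℂ)) ^ n - 2 ^ n * (a : ℂ) ^ n) * z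
          + (1 + (a : ℂ)) * ((1 - (a : ℂ)) * (1 + (a : ℂ)) ^ (n - 1) + 2 ^ n * (a : ℂ) ^ n))‖ < 1 := by
  have hpow : (1 + (a : ℂ)) ^ n = (1 + a) * (1 + a) ^ (n - 1) := by
    rw [← pow_succ', Nat.sub_add_cancel hn]
  have hP : (1 + (a : ℂ)) ^ (n - 1) = ((1 + a) ^ (n - 1) : ℝ) := by push_cast; rfl
  have hq : 2 ^ n * (a : ℂ) ^ n = (2 ^ n * a ^ n : ℝ) := by push_cast; rfl
  rw [hpow, hP, hq]
  exact ne_zero_and_norm_div_lt_one_of_norm_lt <|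
    norm_psi_num_lt_norm_psi_den ha0 ha1.le (by positivity) (by positivity) hz
end
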